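/- Let S0 and T0 be closed subspaces of a complex Hilbert space H admitting a common complement. Consider E := {(P, G, K) : P an orthogonal projection on H, G and K invertible operators with G(range P) = range P and K(range P) = range P}, with the topology inherited from B(H)³, and let F := {(P, G, K) ∈ E : G(ker P) = S0 and K(ker P) = T0}. Then: (i) every (P, G, K) ∈ F satisfies range(P) ∔ S0 = H and range(P) ∔ T0 = H (so range(P) is a common complement of S0 and T0); (ii) F is closed in E. -/

import Mathlib

/-! An invertible `G` carries the decomposition `H = range P ⊕ ker P` of an idempotent `P` to
`H = G(range P) ⊕ G(ker P)`, which on the fiber reads `H = range P ⊕ S₀`. For closedness,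
`G(ker P) = S₀` splits into `G (v - P v) ∈ S₀` for every `v` and `P (G⁻¹ s) = 0` for every
`s ∈ S₀`; both are closed conditions on `(P, G)` because `S₀` is closed and inversion is continuous
on the units of `B(H)`. -/

variable (H : Type*) [NormedAddCommGroup H] [InnerProductSpace ℂ H] [CompleteSpace H]

/-- `P` is an orthogonal projection: idempotent and self-adjoint. -/
def IsOrthProjection (P : H →L[ℂ] H) : Prop :=
  P ∘L P = P ∧ IsSelfAdjoint P

variable {H}

/-- The total space `E = ⋃_Z Gl^Z × Gl^Z`, realized as the set of triples
`(P, G, K)` with `P` an orthogonal projection and `G, K` invertible operators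
preserving `range P`, topologized as a subspace of `B(H)³`. -/
abbrev Espace (H : Type*) [NormedAddCommGroup H] [InnerProductSpace ℂ H] [CompleteSpace H] :
    Type _ :=
  {x : (H →L[ℂ] H) × (H →L[ℂ] H) × (H →L[ℂ] H) //
    IsOrthProjection H x.1 ∧ IsUnit x.2.1 ∧ IsUnit x.2.2 ∧
    Submodule.map (x.2.1 : H →ₗ[ℂ] H) (LinearMap.range (x.1 : H →ₗ[ℂ] H)) = LinearMap.range (x.1 : H →ₗ[ℂ] H) ∧
    Submodule.map (x.2.2 : H →ₗ[ℂ] H) (LinearMap.range (x.1 : H →ₗ[ℂ] H)) = LinearMap.range (x.1 : H →ₗ[ℂ] H)}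

/-- The fiber `F_{(S₀,T₀)}` over a pair of subspaces `(S₀, T₀)`. -/
def fiberSet (S₀ T₀ : Submodule ℂ H) : Set (Espace H) :=
  {x : Espace H |
    Submodule.map (x.val.2.1 : H →ₗ[ℂ] H) (LinearMap.ker (x.val.1 : H →ₗ[ℂ] H)) = S₀ ∧
    Submodule.map (x.val.2.2 : H →ₗ[ℂ] H) (LinearMap.ker (x.val.1 : H →ₗ[ℂ] H)) = T₀}

open Submodule LinearMap

section

variable {R M : Type*} [Ring R] [AddCommGroup M] [Module R M]

theorem IsIdempotentElem.isCompl_map_range_ker {P G : M →ₗ[R] M} (hP : IsIdempotentElem P)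
    (hG : Function.Bijective G) : IsCompl (Submodule.map G (range P)) (Submodule.map G (ker P)) :=
  (orderIsoMapComapOfBijective G hG).isCompl_iff.mp hP.isCompl

theorem IsIdempotentElem.map_ker_le_iff {P : M →ₗ[R] M} (hP : IsIdempotentElem P)
    (G : M →ₗ[R] M) (S : Submodule R M) : Submodule.map G (ker P) ≤ S ↔ ∀ v, G (v - P v) ∈ S := by
  rw [LinearMap.IsIdempotentElem.ker_eq_range hP, ← range_comp, range_le_iff_comap, eq_top_iff']
  rfl

end

theorem Continuous.ringInverse {X R : Type*} [TopologicalSpace X] [NormedRing R]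
    [HasSummableGeomSeries R] {f : X → R} (hf : Continuous f) (hu : ∀ x, IsUnit (f x)) :
    Continuous fun x => Ring.inverse (f x) :=
  continuous_iff_continuousAt.2 fun x => by
    obtain ⟨u, hu⟩ := hu x
    exact ContinuousAt.comp (f := f) (hu ▸ NormedRing.inverse_continuousAt u) hf.continuousAt

section

variable {𝕜 E : Type*} [NontriviallyNormedField 𝕜] [NormedAddCommGroup E] [NormedSpace 𝕜 E]

theorem le_map_ker_iff_of_isUnit {G : E →L[𝕜] E} (hG : IsUnit G) (P : E →L[𝕜] E)
    (S : Submodule 𝕜 E) :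
    S ≤ Submodule.map (G : E →ₗ[𝕜] E) (ker (P : E →ₗ[𝕜] E)) ↔
      ∀ s ∈ S, P (Ring.inverse G s) = 0 := by
  obtain ⟨u, rfl⟩ := hG
  have hmap := map_equiv_eq_comap_symm (ContinuousLinearEquiv.unitsEquiv 𝕜 E u).toLinearEquiv
    (ker (P : E →ₗ[𝕜] E))
  rw [Ring.inverse_unit]
  exact hmap ▸ Iff.rfl

variable [CompleteSpace E] {X : Type*} [TopologicalSpace X]

theorem isClosed_setOf_map_ker_eq {P G : X → E →L[𝕜] E} (hP : Continuous P) (hG : Continuous G)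
    (hP_idem : ∀ x, IsIdempotentElem (P x : E →ₗ[𝕜] E)) (hG_unit : ∀ x, IsUnit (G x))
    {S : Submodule 𝕜 E} (hS : IsClosed (S : Set E)) :
    IsClosed {x | Submodule.map (G x : E →ₗ[𝕜] E) (ker (P x : E →ₗ[𝕜] E)) = S} := by
  simp only [le_antisymm_iff, (hP_idem _).map_ker_le_iff, le_map_ker_iff_of_isUnit (hG_unit _),
    ContinuousLinearMap.coe_coe, Set.ofPred_and, Set.ofPred_forall]
  have hG_inv : Continuous fun x => Ring.inverse (G x) := hG.ringInverse hG_unit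
  exact (isClosed_iInter fun v => hS.preimage (by fun_prop)).inter
    (isClosed_iInter fun s => isClosed_iInter fun _ => isClosed_eq (by fun_prop) continuous_const)

end

theorem fiber_complement_and_closed_general
    (S₀ T₀ : Submodule ℂ H) (hS₀ : IsClosed (S₀ : Set H)) (hT₀ : IsClosed (T₀ : Set H)) :
    (∀ x ∈ fiberSet S₀ T₀,
      IsCompl (LinearMap.range (x.val.1 : H →ₗ[ℂ] H)) S₀ ∧ IsCompl (LinearMap.range (x.val.1 : H →ₗ[ℂ] H)) T₀) ∧
    IsClosed (fiberSet S₀ T₀) := by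
  have hP_idem (x : Espace H) : IsIdempotentElem (x.val.1 : H →ₗ[ℂ] H) :=
    congrArg ContinuousLinearMap.toLinearMap x.2.1.1
  refine ⟨fun x ⟨hGS, hKT⟩ => ?_, ?_⟩
  · obtain ⟨-, hG, hK, hGP, hKP⟩ := x.2
    constructor
    · simpa only [hGP, hGS] using
        (hP_idem x).isCompl_map_range_ker (ContinuousLinearMap.isUnit_iff_bijective.mp hG)
    · simpa only [hKP, hKT] using
        (hP_idem x).isCompl_map_range_ker (ContinuousLinearMap.isUnit_iff_bijective.mp hK)
  · exact
      (isClosed_setOf_map_ker_eq (by fun_prop) (by fun_prop) hP_idem (fun x => x.2.2.1) hS₀).inter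
      (isClosed_setOf_map_ker_eq (by fun_prop) (by fun_prop) hP_idem (fun x => x.2.2.2.1) hT₀)

/-- If `S₀`, `T₀` admit a common complement, then (i) each `(P, G, K)` in the
fiber `F_{(S₀,T₀)}` satisfies `range P ∔ S₀ = H` and `range P ∔ T₀ = H`, and
(ii) the fiber is closed in `E`. -/
theorem fiber_complement_and_closed
    (S₀ T₀ : Submodule ℂ H) (hS₀ : IsClosed (S₀ : Set H)) (hT₀ : IsClosed (T₀ : Set H))
    (hcc : ∃ Z : Submodule ℂ H, IsClosed (Z : Set H) ∧ IsCompl Z S₀ ∧ IsCompl Z T₀) :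
    (∀ x ∈ fiberSet S₀ T₀,
      IsCompl (LinearMap.range (x.val.1 : H →ₗ[ℂ] H)) S₀ ∧ IsCompl (LinearMap.range (x.val.1 : H →ₗ[ℂ] H)) T₀) ∧
    IsClosed (fiberSet S₀ T₀) :=
  fiber_complement_and_closed_general S₀ T₀ hS₀ hT₀
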